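/- arXiv:1605.00273 — 4 statements merged into one kernel-verified Lean document; each statement's English description precedes it below -/
import Mathlib

section
/- For an integer M ≥ 2, if f(M) = 2M − 1 then M is a power of 2, where f(M) = Σ_{n=0}^{∞} ⌊M/2^n⌋. -/
def f (M : ℕ) : ℕ := ∑ n ∈ Finset.range (M + 1), M / 2 ^ n

/-!
The tail `∑_{n ≥ 1} ⌊M / 2ⁿ⌋` of `f M` is Legendre's formula for the exponent of `2` in `M!`,
which equals `M - s₂(M)` with `s₂` the binary digit sum. Hence `f M = 2M - s₂(M)`, and
`f M = 2M - 1` says that `M` has a single nonzero binary digit.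
-/

open Nat

theorem Nat.exists_eq_pow_of_digits_sum_eq_one {b n : ℕ} (hb : 1 < b)
    (h : (b.digits n).sum = 1) : ∃ r, n = b ^ r := by
  induction n using Nat.strong_induction_on with
  | _ n ih =>
    have hn : n ≠ 0 := by rintro rfl; simp at h
    rw [digits_def' hb (pos_of_ne_zero hn), List.sum_cons] at h
    obtain hq | hq : (b.digits (n / b)).sum = 0 ∨ (b.digits (n / b)).sum = 1 := by omega
    · have hq0 : n / b = 0 := by
        by_contra hq0
        exact getLast_digit_ne_zero b hq0
          (List.sum_eq_zero_iff.mp hq _ (List.getLast_mem _))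
      exact ⟨0, by have := mod_add_div n b; rw [hq0] at this; rw [pow_zero]; omega⟩
    · obtain ⟨r, hr⟩ := ih (n / b) (div_lt_self (pos_of_ne_zero hn) hb) hq
      exact ⟨r + 1, by have := mod_add_div n b; rw [hr] at this; rw [pow_succ']; omega⟩

theorem f_eq_add_padicValNat_factorial (M : ℕ) : f M = M + padicValNat 2 M ! := by
  rw [padicValNat_factorial (b := M + 1) (lt_succ_of_le (log_le_self 2 M)), f,
    Finset.range_eq_Ico, Finset.sum_eq_sum_Ico_succ_bot (succ_pos M)]
  simp

theorem f_eq_two_mul_sub_digits_sum (M : ℕ) : f M = 2 * M - (Nat.digits 2 M).sum := by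
  have legendre := sub_one_mul_padicValNat_factorial (p := 2) M
  have := digit_sum_le 2 M
  rw [f_eq_add_padicValNat_factorial]
  omega

theorem stmt_2 (M : ℕ) (hM : 2 ≤ M) (h : f M = 2 * M - 1) : ∃ r : ℕ, M = 2 ^ r := by
  have hsum : (Nat.digits 2 M).sum = 1 := by
    have := digit_sum_le 2 M
    rw [f_eq_two_mul_sub_digits_sum] at h
    omega
  exact Nat.exists_eq_pow_of_digits_sum_eq_one one_lt_two hsum
end

section
/- Let Λ be a finite abelian subgroup of (ℝ/ℤ)^e and suppose that for every element x of Λ, the sum of the entries of x (taking representatives in [0,1)) is at most s. Then for every x ∈ Λ, the number of nonzero coordinates of x is at most 2s. -/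
/-!
For `t ∉ ℤ` the fractional parts of `t` and `-t` add up to `1`, so coordinatewise
`height x + height (-x) = wt x`. Since `x` and `-x` both lie in `Λ`, each height is at most `s`.
-/

/-- The representative in `[0,1)` of an element of `ℝ/ℤ`. -/
noncomputable def rep (x : AddCircle (1 : ℝ)) : ℝ := (AddCircle.equivIco 1 0 x : ℝ)

/-- `height x`: the sum of the representatives in `[0,1)` of the coordinates. -/
noncomputable def height {e : ℕ} (x : Fin e → AddCircle (1 : ℝ)) : ℝ := ∑ i, rep (x i)

/-- `wt x`: the number of nonzero coordinates. -/
noncomputable def wt {e : ℕ} (x : Fin e → AddCircle (1 : ℝ)) : ℕ := Nat.card {i : Fin e // x i ≠ 0}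

lemma rep_coe (t : ℝ) : rep t = Int.fract t := by
  simp [rep]

lemma rep_zero : rep 0 = 0 := by
  simpa using rep_coe 0

lemma rep_eq_zero_iff {x : AddCircle (1 : ℝ)} : rep x = 0 ↔ x = 0 := by
  rw [← rep_zero, rep, rep, Subtype.coe_inj, (AddCircle.equivIco 1 0).injective.eq_iff]

lemma rep_add_rep_neg (x : AddCircle (1 : ℝ)) : rep x + rep (-x) = if x = 0 then 0 else 1 := by
  split_ifs with hx
  · simp [hx, rep_zero]
  · induction x using QuotientAddGroup.induction_on with
    | H t =>
      rw [← rep_eq_zero_iff, rep_coe] at hx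
      rw [← AddCircle.coe_neg, rep_coe, rep_coe, Int.fract_neg hx]
      ring

lemma height_add_height_neg {e : ℕ} (x : Fin e → AddCircle (1 : ℝ)) :
    height x + height (-x) = wt x := by
  simp only [height, wt, ← Finset.sum_add_distrib, Pi.neg_apply, rep_add_rep_neg]
  simp [Finset.sum_ite, Nat.card_eq_fintype_card, Fintype.card_subtype]

theorem stmt_5_general (e : ℕ) (s : ℝ) (Λ : AddSubgroup (Fin e → AddCircle (1 : ℝ)))
    (hdeg : ∀ x ∈ Λ, height x ≤ s) :
    ∀ x ∈ Λ, (wt x : ℝ) ≤ 2 * s := by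
  intro x hx
  rw [← height_add_height_neg]
  linarith [hdeg x hx, hdeg (-x) (neg_mem hx)]

theorem stmt_5 (e : ℕ) (s : ℝ) (Λ : AddSubgroup (Fin e → AddCircle (1 : ℝ)))
    (hfin : (Λ : Set (Fin e → AddCircle (1 : ℝ))).Finite)
    (hdeg : ∀ x ∈ Λ, height x ≤ s) :
    ∀ x ∈ Λ, (wt x : ℝ) ≤ 2 * s :=
  stmt_5_general e s Λ hdeg
end

section
/- Let Λ be a finite abelian subgroup of (ℝ/ℤ)^e with e ≥ 3, and suppose wt(x) ≤ M for all x ∈ Λ, where M ≥ 2 is an integer. If every coordinate index i ∈ {1,…,e} lies in the support of some element of Λ, then e ≤ f(M). -/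
/-!
Pick `x ∈ Λ` of maximal weight and let `y ∈ Λ` have order `N`. Averaging the weights of
`x + n • y` over `n < N` shows that at least half of the support of `y` lies in the support of
`x`: on each coordinate where `y` is nonzero, `x i + n • y i` vanishes for at most half of the
`n`, because `n ↦ n • y i` is periodic with period at least `2`. So erasing the coordinates in
the support of `x` (at most `M` of them) leaves a subgroup of weights at most `M / 2`, and
induction gives `e ≤ M + f (M / 2) = f M`.
-/

open Finset

theorem f_eq_sum_range {M K : ℕ} (hK : M < K) : f M = ∑ n ∈ range K, M / 2 ^ n := by
  refine sum_subset (range_subset_range.mpr hK) fun n hnK hnM => Nat.div_eq_of_lt ?_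
  rw [mem_range, not_lt] at hnM
  exact M.lt_two_pow_self.trans_le (Nat.pow_le_pow_right two_pos (by omega))

theorem f_eq_add_f_div_two (M : ℕ) : f M = M + f (M / 2) := by
  rw [f_eq_sum_range (K := M + 2) (by omega), f_eq_sum_range (K := M + 1) (by omega),
    sum_range_succ', pow_zero, Nat.div_one, add_comm]
  simp only [pow_succ', Nat.div_div_eq_div_mul]

section Weights

variable {ι A : Type*} [Fintype ι] [DecidableEq A]

theorem hammingNorm_indicator [Zero A] (s : Set ι) [DecidablePred (· ∈ s)] (y : ι → A) :
    hammingNorm (s.indicator y) = #{i | y i ≠ 0 ∧ i ∈ s} := by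
  simp only [hammingNorm, Set.indicator_apply_ne_zero, Set.mem_inter_iff, Function.mem_support,
    and_comm]

theorem exists_forall_hammingNorm_le [Zero A] {S : Set (ι → A)} (hS : S.Nonempty) :
    ∃ x ∈ S, ∀ y ∈ S, hammingNorm y ≤ hammingNorm x := by
  have hbdd : BddAbove (hammingNorm '' S) :=
    ⟨Fintype.card ι, by rintro _ ⟨y, -, rfl⟩; exact hammingNorm_le_card_fintype⟩
  obtain ⟨x, hx, hsup⟩ := Nat.sSup_mem (hS.image _) hbdd
  exact ⟨x, hx, fun y hy => hsup ▸ le_csSup hbdd (Set.mem_image_of_mem _ hy)⟩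

variable [AddCommGroup A]

theorem two_mul_card_range_nsmul_eq_le {b : A} (hb : b ≠ 0) {N : ℕ} (hN : N • b = 0) (c : A) :
    2 * #{n ∈ range N | n • b = c} ≤ N := by
  rcases {n ∈ range N | n • b = c}.eq_empty_or_nonempty with hempty | ⟨t, ht⟩
  · simp [hempty]
  set m := addOrderOf b
  have hmN : m ∣ N := addOrderOf_dvd_of_nsmul_eq_zero hN
  have hm0 : 0 < m :=
    Nat.pos_of_dvd_of_pos hmN (Nat.zero_lt_of_lt (mem_range.mp (mem_filter.mp ht).1))
  have hm1 : m ≠ 1 := mt AddMonoid.addOrderOf_eq_one_iff.mp hb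
  have hsub : {n ∈ range N | n • b = c} ⊆ {n ∈ range N | n ≡ t [MOD m]} := by
    intro n hn
    simp only [mem_filter] at hn ht ⊢
    exact ⟨hn.1, nsmul_eq_nsmul_iff_modEq.mp (hn.2.trans ht.2.symm)⟩
  have hcount : #{n ∈ range N | n ≡ t [MOD m]} = N / m := by
    rw [← Nat.count_eq_card_filter_range, Nat.count_modEq_card _ hm0,
      Nat.mod_eq_zero_of_dvd hmN]
    simp
  calc 2 * #{n ∈ range N | n • b = c} ≤ m * (N / m) := by
        gcongr
        · omega
        · exact hcount ▸ card_le_card hsub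
    _ = N := Nat.mul_div_cancel' hmN

theorem le_two_mul_card_range_add_nsmul_ne_zero (a : A) {b : A} (hb : b ≠ 0) {N : ℕ}
    (hN : N • b = 0) : N ≤ 2 * #{n ∈ range N | a + n • b ≠ 0} := by
  have hsplit := card_filter_add_card_filter_not (s := range N) (fun n => a + n • b ≠ 0)
  have hzeros : #{n ∈ range N | ¬a + n • b ≠ 0} = #{n ∈ range N | n • b = -a} := by
    simp only [not_not, add_eq_zero_iff_eq_neg']
  have := two_mul_card_range_nsmul_eq_le hb hN (-a)
  rw [card_range] at hsplit
  omega

theorem two_mul_card_support_sdiff_le_hammingNorm {x y : ι → A} (hy : IsOfFinAddOrder y)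
    (hmax : ∀ n : ℕ, hammingNorm (x + n • y) ≤ hammingNorm x) :
    2 * #{i | y i ≠ 0 ∧ x i = 0} ≤ hammingNorm y := by
  set N := addOrderOf y
  have hN : 0 < N := hy.addOrderOf_pos
  have hNy : ∀ i, N • y i = 0 := congrFun (addOrderOf_nsmul_eq_zero y)
  set c : ι → ℕ := fun i => #{n ∈ range N | x i + n • y i ≠ 0}
  have hsum : ∑ i, c i ≤ N * hammingNorm x :=
    calc ∑ i, c i = ∑ n ∈ range N, hammingNorm (x + n • y) := by
          simp only [c, hammingNorm, card_filter, Pi.add_apply, Pi.smul_apply]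
          exact sum_comm
      _ ≤ ∑ _n ∈ range N, hammingNorm x := sum_le_sum fun n _ => hmax n
      _ = N * hammingNorm x := by rw [sum_const, card_range, smul_eq_mul]
  -- `c i` is `N` or `0` where `y i = 0`, and at least `N / 2` elsewhere
  have hcoord : ∀ i,
      N * (2 * (if x i ≠ 0 then 1 else 0) + 2 * (if y i ≠ 0 ∧ x i = 0 then 1 else 0))
        ≤ 2 * c i + N * (if y i ≠ 0 then 1 else 0) := by
    intro i
    by_cases hyi : y i = 0
    · have hci : c i = if x i = 0 then 0 else N := by
        by_cases hxi : x i = 0 <;> simp [c, hyi, hxi]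
      by_cases hxi : x i = 0 <;> simp [hci, hyi, hxi, mul_comm]
    · have : N ≤ 2 * c i := le_two_mul_card_range_add_nsmul_ne_zero (x i) hyi (hNy i)
      by_cases hxi : x i = 0 <;> simp [hyi, hxi] <;> omega
  have htotal := sum_le_sum fun i (_ : i ∈ univ) => hcoord i
  simp only [← mul_sum, sum_add_distrib, ← card_filter] at htotal
  refine Nat.le_of_mul_le_mul_left ?_ hN
  rw [hammingNorm] at hsum ⊢
  nlinarith

theorem hammingNorm_le_half_of_mem_map_indicatorHom {Λ : AddSubgroup (ι → A)}
    (hΛ : ∀ y ∈ Λ, IsOfFinAddOrder y) {M : ℕ} (hM : ∀ y ∈ Λ, hammingNorm y ≤ M)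
    {x : ι → A} (hx : x ∈ Λ) (hmax : ∀ y ∈ Λ, hammingNorm y ≤ hammingNorm x) :
    ∀ y ∈ Λ.map (Set.indicatorHom A {i | x i = 0}), hammingNorm y ≤ M / 2 := by
  rintro _ ⟨y, hy, rfl⟩
  have hhalf := two_mul_card_support_sdiff_le_hammingNorm (hΛ y hy)
    fun n => hmax _ (Λ.add_mem hx (Λ.nsmul_mem hy n))
  have hyM := hM y hy
  change hammingNorm ({i | x i = 0}.indicator y) ≤ M / 2
  rw [hammingNorm_indicator]
  simp only [Set.mem_ofPred_eq]
  omega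

theorem card_le_f_of_hammingNorm_le {Λ : AddSubgroup (ι → A)}
    (hΛ : ∀ y ∈ Λ, IsOfFinAddOrder y) {M : ℕ} (hM : ∀ y ∈ Λ, hammingNorm y ≤ M)
    {s : Finset ι} (hs : ∀ i ∈ s, ∃ y ∈ Λ, y i ≠ 0) :
    #s ≤ f M := by
  induction M using Nat.strong_induction_on generalizing Λ s with
  | _ M ih =>
    rcases M.eq_zero_or_pos with rfl | hM0
    · obtain rfl : s = ∅ := eq_empty_of_forall_notMem fun i hi => by
        obtain ⟨y, hy, hyi⟩ := hs i hi
        exact hyi (by rw [hammingNorm_eq_zero.mp (Nat.le_zero.mp (hM y hy))]; rfl)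
      simp
    obtain ⟨x, hx, hmax⟩ :=
      exists_forall_hammingNorm_le (S := (Λ : Set (ι → A))) ⟨0, Λ.zero_mem⟩
    set π := Set.indicatorHom A {i | x i = 0}
    have hΛ' : ∀ y ∈ Λ.map π, IsOfFinAddOrder y := by
      rintro _ ⟨y, hy, rfl⟩
      exact π.isOfFinAddOrder (hΛ y hy)
    have hs' : ∀ i ∈ {i ∈ s | x i = 0}, ∃ y ∈ Λ.map π, y i ≠ 0 := by
      intro i hi
      rw [mem_filter] at hi
      obtain ⟨y, hy, hyi⟩ := hs i hi.1
      exact ⟨π y, ⟨y, hy, rfl⟩,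
        (Set.indicator_of_mem (s := {i | x i = 0}) hi.2 y).trans_ne hyi⟩
    calc #s = #{i ∈ s | x i ≠ 0} + #{i ∈ s | x i = 0} := by
          rw [add_comm, card_filter_add_card_filter_not]
      _ ≤ hammingNorm x + f (M / 2) := by
          gcongr
          · exact card_le_card (filter_subset_filter _ (subset_univ s))
          · exact ih _ (Nat.div_lt_self hM0 one_lt_two) hΛ'
              (hammingNorm_le_half_of_mem_map_indicatorHom hΛ hM hx hmax) hs'
      _ ≤ M + f (M / 2) := by gcongr; exact hM x hx
      _ = f M := (f_eq_add_f_div_two M).symm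

end Weights

theorem wt_eq_hammingNorm {e : ℕ} [DecidableEq (AddCircle (1 : ℝ))]
    (x : Fin e → AddCircle (1 : ℝ)) : wt x = hammingNorm x := by
  rw [wt, Nat.card_eq_fintype_card, Fintype.card_subtype, hammingNorm]

theorem stmt_6_general (e M : ℕ)
    (Λ : AddSubgroup (Fin e → AddCircle (1 : ℝ)))
    (hfin : (Λ : Set (Fin e → AddCircle (1 : ℝ))).Finite)
    (hwt : ∀ x ∈ Λ, wt x ≤ M)
    (hfull : ∀ i : Fin e, ∃ x ∈ Λ, x i ≠ 0) :
    e ≤ f M := by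
  classical
  have : Finite Λ := hfin.to_subtype
  have htorsion : ∀ x ∈ Λ, IsOfFinAddOrder x := fun x hx =>
    Λ.subtype.isOfFinAddOrder (isOfFinAddOrder_of_finite (⟨x, hx⟩ : Λ))
  simpa using card_le_f_of_hammingNorm_le htorsion
    (fun x hx => wt_eq_hammingNorm x ▸ hwt x hx) (s := univ) fun i _ => hfull i

theorem stmt_6 (e M : ℕ) (he : 3 ≤ e) (hM : 2 ≤ M)
    (Λ : AddSubgroup (Fin e → AddCircle (1 : ℝ)))
    (hfin : (Λ : Set (Fin e → AddCircle (1 : ℝ))).Finite)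
    (hwt : ∀ x ∈ Λ, wt x ≤ M)
    (hfull : ∀ i : Fin e, ∃ x ∈ Λ, x i ≠ 0) :
    e ≤ f M :=
  stmt_6_general e M Λ hfin hwt hfull
end

section
/- Let Λ be a finite abelian subgroup of (ℝ/ℤ)^e, and let x_1, x_2, …, x_q be elements of Λ chosen greedily: x_1 has maximal weight among all elements of Λ, and for j ≥ 2, x_j maximizes |supp(x_j) \ (supp(x_1) ∪ ⋯ ∪ supp(x_{j−1}))| among elements of Λ. Setting I_j = supp(x_j) \ (I_1 ∪ ⋯ ∪ I_{j−1}) with I_1 = supp(x_1), one has |I_j| ≤ ⌊|I_1| / 2^{j−1}⌋ for each j ≥ 2. -/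
/-- The support of an element of `(ℝ/ℤ)^e`. -/
def supp {e : ℕ} (x : Fin e → AddCircle (1 : ℝ)) : Set (Fin e) := {i | x i ≠ 0}

/-- `I j = supp (x j) \ (supp (x 0) ∪ ⋯ ∪ supp (x (j-1)))` (0-indexed). -/
def newSupp {e q : ℕ} (x : Fin q → (Fin e → AddCircle (1 : ℝ))) (j : Fin q) : Set (Fin e) :=
  {i | i ∈ supp (x j) ∧ ∀ k : Fin q, k < j → i ∉ supp (x k)}

/-!
Let `F` be the set of coordinates not covered by `x 0, …, x (j-1)`, `A = supp (x j)` and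
`B = supp (x k)` for some `k > j`, so that `I j = A ∩ F` and `I k ⊆ (B ∩ F) \ A`.
Greedy maximality of `x j`, tested against `x k`, gives `|A ∩ B ∩ F| + |I k| ≤ |A ∩ F|`;
tested against `x j + x k`, whose support contains `A ∆ B`, it gives `|I k| ≤ |A ∩ B ∩ F|`.
Hence `2 |I k| ≤ |I j|`, and the bound follows by halving `j` times starting from `I 0 = A`.
-/

theorem Set.two_mul_ncard_diff_le_of_symmDiff_subset {α : Type*} [Finite α] {A B C F : Set α}
    (hC : symmDiff A B ⊆ C) (hBF : (B ∩ F).ncard ≤ (A ∩ F).ncard)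
    (hCF : (C ∩ F).ncard ≤ (A ∩ F).ncard) :
    2 * ((B ∩ F) \ A).ncard ≤ (A ∩ F).ncard := by
  have hB : (B ∩ F ∩ A).ncard + ((B ∩ F) \ A).ncard = (B ∩ F).ncard :=
    Set.ncard_inter_add_ncard_sdiff_eq_ncard _ _
  have hA : (A ∩ F ∩ B).ncard + ((A ∩ F) \ B).ncard = (A ∩ F).ncard :=
    Set.ncard_inter_add_ncard_sdiff_eq_ncard _ _
  have hcomm : A ∩ F ∩ B = B ∩ F ∩ A := by
    ext; simp only [Set.mem_inter_iff]; tauto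
  have hsymm : ((A ∩ F) \ B).ncard + ((B ∩ F) \ A).ncard ≤ (C ∩ F).ncard := by
    have hdisj : Disjoint ((A ∩ F) \ B) ((B ∩ F) \ A) :=
      Set.disjoint_left.2 fun _ ha hb => ha.2 hb.1.1
    rw [← Set.ncard_union_eq hdisj]
    refine Set.ncard_le_ncard ?_
    rintro i (⟨⟨hA, hF⟩, hB⟩ | ⟨⟨hB, hF⟩, hA⟩)
    · exact ⟨hC (Or.inl ⟨hA, hB⟩), hF⟩
    · exact ⟨hC (Or.inr ⟨hB, hA⟩), hF⟩
  rw [hcomm] at hA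
  omega

theorem symmDiff_supp_subset_supp_add {e : ℕ} (y z : Fin e → AddCircle (1 : ℝ)) :
    symmDiff (supp y) (supp z) ⊆ supp (y + z) := by
  rintro i (⟨hy, hz⟩ | ⟨hz, hy⟩)
  · simpa [supp, not_not.1 hz] using hy
  · simpa [supp, not_not.1 hy] using hz

theorem Fin.le_div_two_pow_of_two_mul_le {q : ℕ} (hq : 0 < q) {g : Fin q → ℕ}
    (hg : ∀ j k : Fin q, j < k → 2 * g k ≤ g j) (j : Fin q) :
    g j ≤ g ⟨0, hq⟩ / 2 ^ (j : ℕ) := by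
  obtain ⟨n, hn⟩ := j
  induction n with
  | zero => simp
  | succ n ih =>
    have hstep := hg ⟨n, by omega⟩ ⟨n + 1, hn⟩ (Fin.mk_lt_mk.2 n.lt_succ_self)
    calc g ⟨n + 1, hn⟩ ≤ g ⟨n, by omega⟩ / 2 := (Nat.le_div_iff_mul_le two_pos).2 (by omega)
      _ ≤ g ⟨0, hq⟩ / 2 ^ n / 2 := Nat.div_le_div_right (ih (by omega))
      _ = g ⟨0, hq⟩ / 2 ^ (n + 1) := by rw [Nat.div_div_eq_div_mul, pow_succ]

section Greedy

variable {e q : ℕ} (x : Fin q → (Fin e → AddCircle (1 : ℝ)))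

def uncovered (j : Fin q) : Set (Fin e) := {i | ∀ k : Fin q, k < j → i ∉ supp (x k)}

theorem newSupp_subset_of_lt {j k : Fin q} (hjk : j < k) :
    newSupp x k ⊆ (supp (x k) ∩ uncovered x j) \ supp (x j) :=
  fun _ hi => ⟨⟨hi.1, fun l hl => hi.2 l (hl.trans hjk)⟩, hi.2 j hjk⟩

theorem newSupp_of_val_eq_zero (hq : 0 < q) : newSupp x ⟨0, hq⟩ = supp (x ⟨0, hq⟩) :=
  Set.sep_eq_self_iff_mem_true.2 fun _ _ _ hk => (Nat.not_lt_zero _ hk).elim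

theorem two_mul_ncard_newSupp_le_of_lt (Λ : AddSubgroup (Fin e → AddCircle (1 : ℝ)))
    (hxΛ : ∀ j, x j ∈ Λ) {j k : Fin q} (hjk : j < k)
    (hgreedy : ∀ y ∈ Λ, (supp y ∩ uncovered x j).ncard ≤ (newSupp x j).ncard) :
    2 * (newSupp x k).ncard ≤ (newSupp x j).ncard :=
  calc 2 * (newSupp x k).ncard
      ≤ 2 * ((supp (x k) ∩ uncovered x j) \ supp (x j)).ncard :=
        Nat.mul_le_mul_left 2 (Set.ncard_le_ncard (newSupp_subset_of_lt x hjk))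
    _ ≤ (newSupp x j).ncard :=
        Set.two_mul_ncard_diff_le_of_symmDiff_subset (symmDiff_supp_subset_supp_add _ _)
          (hgreedy _ (hxΛ k)) (hgreedy _ (Λ.add_mem (hxΛ j) (hxΛ k)))

end Greedy

theorem stmt_7_general (e q : ℕ) (hq : 0 < q) (Λ : AddSubgroup (Fin e → AddCircle (1 : ℝ)))
    (x : Fin q → (Fin e → AddCircle (1 : ℝ)))
    (hxΛ : ∀ j, x j ∈ Λ)
    -- the greedy choice: `x j` maximizes the number of new support indices
    (hgreedy : ∀ j : Fin q, ∀ y ∈ Λ,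
      Nat.card {i : Fin e | i ∈ supp y ∧ ∀ k : Fin q, k < j → i ∉ supp (x k)} ≤
      Nat.card (newSupp x j)) :
    ∀ j : Fin q, Nat.card (newSupp x j) ≤ Nat.card (supp (x ⟨0, hq⟩)) / 2 ^ (j : ℕ) := by
  intro j
  have hhalving : ∀ j k : Fin q, j < k → 2 * (newSupp x k).ncard ≤ (newSupp x j).ncard :=
    fun j k hjk => two_mul_ncard_newSupp_le_of_lt x Λ hxΛ hjk fun y hy => by
      rw [← Nat.card_coe_set_eq, ← Nat.card_coe_set_eq]; exact hgreedy j y hy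
  simpa only [Nat.card_coe_set_eq, newSupp_of_val_eq_zero x hq] using
    Fin.le_div_two_pow_of_two_mul_le hq hhalving j

theorem stmt_7 (e q : ℕ) (hq : 0 < q) (Λ : AddSubgroup (Fin e → AddCircle (1 : ℝ)))
    (hfin : (Λ : Set (Fin e → AddCircle (1 : ℝ))).Finite)
    (x : Fin q → (Fin e → AddCircle (1 : ℝ)))
    (hxΛ : ∀ j, x j ∈ Λ)
    -- `x 0` has maximal weight in `Λ`
    (hmax : ∀ y ∈ Λ, Nat.card (supp y) ≤ Nat.card (supp (x ⟨0, hq⟩)))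
    -- the greedy choice: `x j` maximizes the number of new support indices
    (hgreedy : ∀ j : Fin q, ∀ y ∈ Λ,
      Nat.card {i : Fin e | i ∈ supp y ∧ ∀ k : Fin q, k < j → i ∉ supp (x k)} ≤
      Nat.card (newSupp x j)) :
    ∀ j : Fin q, Nat.card (newSupp x j) ≤ Nat.card (supp (x ⟨0, hq⟩)) / 2 ^ (j : ℕ) :=
  stmt_7_general e q hq Λ x hxΛ hgreedy
end
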